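/- arXiv:2112.02645 — 3 statements merged into one kernel-verified Lean document; each statement's English description precedes it below -/
import Mathlib

section
/- Let D be a weighted oriented graph with edge ideal I(D). If p_1, …, p_r are the minimal primes of I(D), then for each p_i there is exactly one irreducible component q_i of I(D) with rad(q_i) = p_i, and I(D)^{(n)} = ⋂_{i=1}^r q_i^n for all n ≥ 1. -/
open MvPolynomial Pointwise

/-- A weighted oriented graph `D` on vertices `t_1, …, t_s` (indexed by `Fin s`):
a set of directed edges with no loops such that for each unordered pair of vertices at
most one orientation occurs, together with a weight function `w : V(D) → ℕ₊` which
equals `1` on every source vertex (a vertex having only outgoing edges, i.e. no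
incoming edge). -/
structure WOGraph (s : ℕ) where
  E : Set (Fin s × Fin s)
  no_loops : ∀ i : Fin s, (i, i) ∉ E
  no_two_orientations : ∀ i j : Fin s, (i, j) ∈ E → (j, i) ∉ E
  w : Fin s → ℕ
  w_pos : ∀ i, 1 ≤ w i
  source_weight_one : ∀ i : Fin s, (∀ j, (j, i) ∉ E) → w i = 1

/-- A vertex of `D` is a sink if it has only incoming edges. -/
def WOGraph.IsSink {s : ℕ} (D : WOGraph s) (i : Fin s) : Prop := ∀ j, (i, j) ∉ D.E

/-- `V⁺(D)`: the set of vertices of weight greater than `1`. -/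
def WOGraph.Vplus {s : ℕ} (D : WOGraph s) : Set (Fin s) := { i | 1 < D.w i }

/-- The underlying simple graph `G` of `D`, with edges `{t_i, t_j}` for `(t_i,t_j) ∈ E(D)`. -/
def WOGraph.underlying {s : ℕ} (D : WOGraph s) : SimpleGraph (Fin s) :=
  SimpleGraph.fromRel (fun i j => (i, j) ∈ D.E)

/-- The edge ideal `I(D) = (t_i t_j^{w_j} : (t_i, t_j) ∈ E(D))` of `D`
in `S = K[t_1, …, t_s]`. -/
noncomputable def WOGraph.edgeIdeal {s : ℕ} (D : WOGraph s) (K : Type*) [Field K] :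
    Ideal (MvPolynomial (Fin s) K) :=
  Ideal.span { f | ∃ e ∈ D.E, f = X e.1 * X e.2 ^ D.w e.2 }

/-- The contraction `J S_p ∩ S` to `R` of the extension of an ideal `J` to the
localization of `R` at a prime ideal `p`. -/
noncomputable def contractAt {R : Type*} [CommRing R] (J p : Ideal R) (hp : p.IsPrime) :
    Ideal R :=
  letI := hp
  (J.map (algebraMap R (Localization.AtPrime p))).comap
    (algebraMap R (Localization.AtPrime p))

/-- The `n`-th symbolic power `I^{(n)} = ⋂_{i=1}^r (Iⁿ S_{p_i} ∩ S)`, the intersection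
being taken over the minimal primes `p_1, …, p_r` of `I`. -/
noncomputable def symbolicPower {R : Type*} [CommRing R] (I : Ideal R) (n : ℕ) : Ideal R :=
  ⨅ (p : Ideal R) (hp : p ∈ I.minimalPrimes), contractAt (I ^ n) p hp.1.1

/-- For `b ∈ ℕ^s \ {0}`, the irreducible monomial ideal
`q_b = ({t_i^{b_i} : b_i ≥ 1})`. -/
noncomputable def irredIdeal (K : Type*) [Field K] {s : ℕ} (b : Fin s → ℕ) :
    Ideal (MvPolynomial (Fin s) K) :=
  Ideal.span { f | ∃ i : Fin s, 1 ≤ b i ∧ f = X i ^ b i }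

/-!
A minimal prime `p` of `I(D)` contains some component `q_{α_i}`, hence equals its radical
`P_C = (t_i : i ∈ C)`, and by minimality `C` is a minimal vertex cover of `D`: every `j ∈ C` has
a neighbour outside `C`. Localizing at `P_C` inverts the variables outside `C`, so `I(D)` and the
irreducible ideal `I_C` generated by `t_j` (for `j ∈ C` with an out-neighbour outside `C`) and
`t_j ^ w_j` (for the other `j ∈ C`) have the same extension. Monomial ideals generated in the
variables of `C` are saturated with respect to `P_C`, so `I(D)ⁿ S_p ∩ S = I_Cⁿ`.

For `n = 1` the same contraction, computed from the decomposition, is the intersection of the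
components contained in `p`. Since `I_C` is irreducible it is one of them, and irredundancy makes
it the only one.
-/

theorem Finsupp.weight_indicator_eq_zero_iff {σ : Type*} {C : Set σ} {a : σ →₀ ℕ} :
    Finsupp.weight (C.indicator 1) a = 0 ↔ ∀ i ∈ C, a i = 0 := by
  classical
  simp only [Finsupp.weight_apply, Finsupp.sum, Finset.sum_eq_zero_iff, Finsupp.mem_support_iff,
    smul_eq_mul, mul_eq_zero, Set.indicator_apply]
  constructor
  · intro h i hi
    by_contra h0
    exact h0 (by simpa [hi] using h i h0)
  · intro h i _
    by_cases hi : i ∈ C <;> simp [hi, h]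

namespace MvPolynomial

variable {σ R : Type*} [CommSemiring R]

variable (R) in
noncomputable def monomialIdeal (G : Set (σ →₀ ℕ)) : Ideal (MvPolynomial σ R) :=
  Ideal.span ((fun g => monomial g (1 : R)) '' G)

theorem mem_monomialIdeal_iff {G : Set (σ →₀ ℕ)} {f : MvPolynomial σ R} :
    f ∈ monomialIdeal R G ↔ ∀ m ∈ f.support, ∃ g ∈ G, g ≤ m :=
  mem_ideal_span_monomial_image

theorem monomial_one_mem_monomialIdeal_iff [Nontrivial R] {G : Set (σ →₀ ℕ)} {m : σ →₀ ℕ} :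
    monomial m (1 : R) ∈ monomialIdeal R G ↔ ∃ g ∈ G, g ≤ m := by
  classical
  rw [mem_monomialIdeal_iff, support_monomial, if_neg one_ne_zero]
  simp

theorem monomialIdeal_mul (A B : Set (σ →₀ ℕ)) :
    monomialIdeal R A * monomialIdeal R B = monomialIdeal R (A + B) := by
  simp only [monomialIdeal, Ideal.span_mul_span']
  congr 1
  ext f
  simp only [Set.mem_mul, Set.mem_add, Set.mem_image]
  constructor
  · rintro ⟨_, ⟨a, ha, rfl⟩, _, ⟨b, hb, rfl⟩, rfl⟩
    exact ⟨a + b, ⟨a, ha, b, hb, rfl⟩, by rw [monomial_mul, one_mul]⟩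
  · rintro ⟨_, ⟨a, ha, b, hb, rfl⟩, rfl⟩
    exact ⟨_, ⟨a, ha, rfl⟩, _, ⟨b, hb, rfl⟩, by rw [monomial_mul, one_mul]⟩

theorem exists_monomialIdeal_eq_pow {C : Set σ} {G : Set (σ →₀ ℕ)}
    (hG : G ⊆ Finsupp.supported ℕ ℕ C) (n : ℕ) :
    ∃ H ⊆ (Finsupp.supported ℕ ℕ C : Set (σ →₀ ℕ)), monomialIdeal R G ^ n = monomialIdeal R H := by
  induction n with
  | zero => exact ⟨{0}, by simp, by simp [monomialIdeal]⟩
  | succ n ih =>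
    obtain ⟨H, hH, hpow⟩ := ih
    refine ⟨H + G, ?_, by rw [pow_succ, hpow, monomialIdeal_mul]⟩
    rintro _ ⟨a, ha, b, hb, rfl⟩
    exact add_mem (hH ha) (hG hb)

theorem coeff_add_mul_eq_of_forall_le {Γ : Type*} [AddCommMonoid Γ] [LinearOrder Γ]
    [IsOrderedCancelAddMonoid Γ] (κ : (σ →₀ ℕ) →+ Γ) (hκ : Function.Injective κ)
    {A B : Set (σ →₀ ℕ)} {u x : MvPolynomial σ R} {a b : σ →₀ ℕ}
    (ha : ∀ a' ∈ u.support, a' ∈ A → κ a ≤ κ a') (hb : ∀ b' ∈ x.support, b' ∈ B → κ b ≤ κ b')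
    (hAB : ∀ a' ∈ u.support, ∀ b' ∈ x.support, a' + b' = a + b → a' ∈ A ∧ b' ∈ B) :
    coeff (a + b) (u * x) = coeff a u * coeff b x := by
  classical
  rw [coeff_mul]
  refine Finset.sum_eq_single_of_mem (a, b) (Finset.HasAntidiagonal.mem_antidiagonal.2 rfl) ?_
  rintro ⟨a', b'⟩ hab hne
  by_contra h0
  have ha' : a' ∈ u.support := mem_support_iff.2 (left_ne_zero_of_mul h0)
  have hb' : b' ∈ x.support := mem_support_iff.2 (right_ne_zero_of_mul h0)
  have hsum : a' + b' = a + b := Finset.HasAntidiagonal.mem_antidiagonal.1 hab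
  obtain ⟨hA, hB⟩ := hAB a' ha' b' hb' hsum
  have hκ_sum : κ a' + κ b' = κ a + κ b := by rw [← map_add, ← map_add, hsum]
  have hle_b := hb b' hb' hB
  have e1 : a' = a := hκ <| le_antisymm
    (not_lt.1 fun hlt => (add_lt_add_of_lt_of_le hlt hle_b).ne' hκ_sum) (ha a' ha' hA)
  subst e1
  exact hne (by rw [add_left_cancel hsum])

theorem mem_monomialIdeal_of_mul_mem [NoZeroDivisors R] {C : Set σ} {G : Set (σ →₀ ℕ)}
    (hG : G ⊆ Finsupp.supported ℕ ℕ C) {u x : MvPolynomial σ R}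
    (hu : u ∉ Ideal.span (X '' C)) (hux : u * x ∈ monomialIdeal R G) : x ∈ monomialIdeal R G := by
  classical
  let : LinearOrder σ := IsWellOrder.linearOrder WellOrderingRel
  let d : (σ →₀ ℕ) →+ ℕ := Finsupp.weight (C.indicator 1)
  -- `κ` orders monomials by their degree in the variables of `C` first. For the `κ`-least
  -- monomials `mu` of `u` free of `C` and `mx` of `x` outside the ideal, the coefficient of
  -- `u * x` at `mu + mx` is `coeff mu u * coeff mx x ≠ 0`, while `mu + mx` is outside the ideal.
  let κ : (σ →₀ ℕ) →+ ℕ ×ₗ Lex (σ →₀ ℕ) :=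
    { toFun := fun a => toLex (d a, toLex a)
      map_zero' := by simp
      map_add' := fun a b => by rw [map_add]; rfl }
  have hκ : Function.Injective κ := fun a b h => congrArg (fun z => (ofLex z).2) h
  by_contra hx
  obtain ⟨mx, hmx, hmx_min⟩ := Finset.exists_min_image
    (x.support.filter fun m => ¬ ∃ g ∈ G, g ≤ m) κ (by
      simpa [Finset.Nonempty, mem_monomialIdeal_iff] using hx)
  obtain ⟨mu, hmu, hmu_min⟩ := Finset.exists_min_image (u.support.filter fun m => d m = 0) κ (by
      simpa [Finset.Nonempty, mem_ideal_span_X_image, Finsupp.weight_indicator_eq_zero_iff, d]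
        using hu)
  rw [Finset.mem_filter] at hmx hmu
  -- the generators live on `C`, where `mu` vanishes
  have hbad : ¬ ∃ g ∈ G, g ≤ mu + mx := by
    rintro ⟨g, hg, hle⟩
    refine hmx.2 ⟨g, hg, fun i => ?_⟩
    by_cases hi : i ∈ C
    · simpa [Finsupp.weight_indicator_eq_zero_iff.1 hmu.2 i hi] using hle i
    · simp [(Finsupp.mem_supported' _ _).1 (hG hg) i hi]
  have hpairs : ∀ a ∈ u.support, ∀ b ∈ x.support, a + b = mu + mx →
      a ∈ {a | d a = 0} ∧ b ∈ {b | ¬ ∃ g ∈ G, g ≤ b} := by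
    intro a _ b hb hab
    have hB : ¬ ∃ g ∈ G, g ≤ b := fun ⟨g, hg, hle⟩ =>
      hbad ⟨g, hg, hle.trans (hab ▸ le_add_self)⟩
    have hd : d mx ≤ d b := Prod.Lex.monotone_fst _ _ (hmx_min b (Finset.mem_filter.2 ⟨hb, hB⟩))
    have hsum : d a + d b = d mu + d mx := by rw [← map_add, ← map_add, hab]
    exact ⟨show d a = 0 by omega, hB⟩
  have hcoeff := coeff_add_mul_eq_of_forall_le κ hκ
    (fun a ha hA => hmu_min a (Finset.mem_filter.2 ⟨ha, hA⟩))
    (fun b hb hB => hmx_min b (Finset.mem_filter.2 ⟨hb, hB⟩)) hpairs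
  refine hbad (mem_monomialIdeal_iff.1 hux _ (mem_support_iff.2 ?_))
  rw [hcoeff]
  exact mul_ne_zero (mem_support_iff.1 hmu.1) (mem_support_iff.1 hmx.1)

theorem span_X_image_eq_monomialIdeal (C : Set σ) :
    Ideal.span (X '' C : Set (MvPolynomial σ R)) =
      monomialIdeal R ((Finsupp.single · 1) '' C) := by
  rw [monomialIdeal, Set.image_image]
  rfl

theorem isPrime_span_X_image [NoZeroDivisors R] [Nontrivial R] (C : Set σ) :
    (Ideal.span (X '' C : Set (MvPolynomial σ R))).IsPrime := by
  refine ⟨fun h => ?_, fun {u x} hux => or_iff_not_imp_left.2 fun hu => ?_⟩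
  · have := mem_ideal_span_X_image.1 (h ▸ Submodule.mem_top : (1 : MvPolynomial σ R) ∈ _)
    simp at this
  · rw [span_X_image_eq_monomialIdeal] at hux ⊢
    refine mem_monomialIdeal_of_mul_mem ?_ hu hux
    rintro _ ⟨i, hi, rfl⟩
    simpa [Finsupp.mem_supported] using hi

theorem X_mem_span_X_image_iff [Nontrivial R] {C : Set σ} {i : σ} :
    X i ∈ Ideal.span (X '' C : Set (MvPolynomial σ R)) ↔ i ∈ C := by
  simp [mem_ideal_span_X_image, support_X, Finsupp.single_apply_eq_zero]

end MvPolynomial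

section contractAt

variable {R : Type*} [CommRing R] {p : Ideal R} (hp : p.IsPrime)

theorem mem_contractAt_iff {J : Ideal R} {x : R} :
    x ∈ contractAt J p hp ↔ ∃ u ∉ p, u * x ∈ J := by
  have := hp
  exact IsLocalization.algebraMap_mem_map_algebraMap_iff p.primeCompl _ J x

theorem le_contractAt (J : Ideal R) : J ≤ contractAt J p hp :=
  letI := hp
  Ideal.le_comap_map

theorem contractAt_mono {J J' : Ideal R} (h : J ≤ J') : contractAt J p hp ≤ contractAt J' p hp :=
  letI := hp
  Ideal.comap_mono (Ideal.map_mono h)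

theorem pow_contractAt_le (J : Ideal R) (n : ℕ) :
    contractAt J p hp ^ n ≤ contractAt (J ^ n) p hp := by
  have := hp
  rw [contractAt, contractAt, Ideal.map_pow]
  exact Ideal.le_comap_pow _ n

theorem contractAt_eq_top_of_not_le {J : Ideal R} (hJ : ¬ J ≤ p) : contractAt J p hp = ⊤ := by
  obtain ⟨u, huJ, hup⟩ := SetLike.not_le_iff_exists.1 hJ
  exact (Ideal.eq_top_iff_one _).2 ((mem_contractAt_iff hp).2 ⟨u, hup, by rwa [mul_one]⟩)

theorem contractAt_iInf {ι : Type*} [Fintype ι] (J : ι → Ideal R) :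
    contractAt (⨅ i, J i) p hp = ⨅ i, contractAt (J i) p hp := by
  classical
  refine le_antisymm (le_iInf fun i => contractAt_mono hp (iInf_le J i)) fun x hx => ?_
  choose u hup hux using fun i => (mem_contractAt_iff hp).1 (Ideal.mem_iInf.1 hx i)
  refine (mem_contractAt_iff hp).2 ⟨∏ i, u i, fun h => ?_, Ideal.mem_iInf.2 fun i => ?_⟩
  · obtain ⟨i, -, hi⟩ := (Ideal.IsPrime.prod_mem_iff (hp := hp)).1 h
    exact hup i hi
  · obtain ⟨c, hc⟩ := Finset.dvd_prod_of_mem u (Finset.mem_univ i)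
    rw [hc, mul_right_comm]
    exact Ideal.mul_mem_right _ _ (hux i)

end contractAt

theorem MvPolynomial.contractAt_monomialIdeal {σ R : Type*} [CommRing R] [IsDomain R]
    {C : Set σ} {G : Set (σ →₀ ℕ)} (hG : G ⊆ Finsupp.supported ℕ ℕ C) :
    contractAt (monomialIdeal R G) _ (isPrime_span_X_image C) = monomialIdeal R G := by
  refine le_antisymm (fun x hx => ?_) (le_contractAt _ _)
  obtain ⟨u, hu, hux⟩ := (mem_contractAt_iff _).1 hx
  exact mem_monomialIdeal_of_mul_mem hG hu hux

theorem Ideal.radical_eq_iff_le_of_mem_minimalPrimes {R : Type*} [CommSemiring R]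
    {I J p : Ideal R} (hp : p ∈ I.minimalPrimes) (hIJ : I ≤ J) (hJ : J.radical.IsPrime) :
    J.radical = p ↔ J ≤ p := by
  refine ⟨fun h => h ▸ Ideal.le_radical, fun h => ?_⟩
  have hrad : J.radical ≤ p := hp.1.1.radical_le_iff.2 h
  exact le_antisymm hrad (hp.2 ⟨hJ, hIJ.trans Ideal.le_radical⟩ hrad)

theorem eq_of_le_of_forall_ne_biInf {α ι : Type*} [CompleteLattice α] {a : α} {J : ι → α}
    (hdec : a = ⨅ i, J i) (hirr : ∀ k, a ≠ ⨅ i ∈ ({k}ᶜ : Set ι), J i) {j k : ι}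
    (h : J j ≤ J k) : j = k := by
  by_contra hjk
  refine hirr k (le_antisymm (hdec ▸ le_iInf₂ fun i _ => iInf_le J i) (hdec ▸ le_iInf fun i => ?_))
  by_cases hik : i = k
  · subst hik
    exact (iInf₂_le j hjk).trans h
  · exact iInf₂_le i hik

section irredIdeal

variable {K : Type*} [Field K] {s : ℕ}

theorem irredIdeal_eq_monomialIdeal (b : Fin s → ℕ) :
    irredIdeal K b =
      monomialIdeal K ((fun i => Finsupp.single i (b i)) '' Function.support b) := by
  rw [irredIdeal, monomialIdeal, Set.image_image]
  congr 1
  ext f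
  simp [← X_pow_eq_monomial, Nat.one_le_iff_ne_zero, eq_comm]

theorem monomial_one_mem_irredIdeal_iff {b : Fin s → ℕ} {m : Fin s →₀ ℕ} :
    monomial m (1 : K) ∈ irredIdeal K b ↔ ∃ i, b i ≠ 0 ∧ b i ≤ m i := by
  simp [irredIdeal_eq_monomialIdeal, monomial_one_mem_monomialIdeal_iff, Finsupp.single_le_iff]

theorem X_pow_mem_irredIdeal {b : Fin s → ℕ} {i : Fin s} {k : ℕ} (hi : b i ≠ 0) (hk : b i ≤ k) :
    (X i ^ k : MvPolynomial (Fin s) K) ∈ irredIdeal K b := by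
  rw [← pow_mul_pow_sub _ hk]
  exact Ideal.mul_mem_right _ _ (Ideal.subset_span ⟨i, Nat.one_le_iff_ne_zero.2 hi, rfl⟩)

theorem irredIdeal_le_irredIdeal {b c : Fin s → ℕ} (h : ∀ k, c k ≠ 0 → b k ≠ 0 ∧ b k ≤ c k) :
    irredIdeal K c ≤ irredIdeal K b := by
  refine Ideal.span_le.2 ?_
  rintro _ ⟨k, hk, rfl⟩
  obtain ⟨hbk, hle⟩ := h k (Nat.one_le_iff_ne_zero.1 hk)
  exact X_pow_mem_irredIdeal hbk hle

theorem exists_irredIdeal_le_of_biInf_le {ι : Type*} {S : Set ι} (hS : S.Finite)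
    {γ : ι → Fin s → ℕ} {b : Fin s → ℕ} (h : ⨅ j ∈ S, irredIdeal K (γ j) ≤ irredIdeal K b) :
    ∃ j ∈ S, irredIdeal K (γ j) ≤ irredIdeal K b := by
  by_contra! hS_not_le
  -- `c j` keeps the exponents of the generators of `q_{γ j}` outside `q_b`; their lcm `m` lies in
  -- every `q_{γ j}` but not in `q_b`
  let c : ι → Fin s →₀ ℕ := fun j => Finsupp.equivFunOnFinite.symm fun k =>
    if b k ≠ 0 ∧ b k ≤ γ j k then 0 else γ j k
  set m : Fin s →₀ ℕ := hS.toFinset.sup c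
  have hm : ∀ i, m i = hS.toFinset.sup fun j => c j i := fun i =>
    Finset.apply_sup_eq_sup_comp (fun m : Fin s →₀ ℕ => m i) (fun _ _ => rfl) rfl
  have hmem : monomial m (1 : K) ∈ irredIdeal K b := h <| by
    simp only [Submodule.mem_iInf]
    intro j hj
    obtain ⟨k, hk, hkb⟩ : ∃ k, γ j k ≠ 0 ∧ ¬ (b k ≠ 0 ∧ b k ≤ γ j k) := by
      by_contra! H
      exact hS_not_le j hj (irredIdeal_le_irredIdeal H)
    refine monomial_one_mem_irredIdeal_iff.2 ⟨k, hk, ?_⟩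
    simpa [c, hkb] using Finset.le_sup (f := c) (hS.mem_toFinset.2 hj) k
  obtain ⟨i, hi, hle⟩ := monomial_one_mem_irredIdeal_iff.1 hmem
  rw [hm, Finset.le_sup_iff (Nat.pos_of_ne_zero hi)] at hle
  obtain ⟨j, -, hle⟩ := hle
  by_cases hij : b i ≤ γ j i <;> simp [c, hi, hij] at hle

theorem radical_irredIdeal (b : Fin s → ℕ) :
    (irredIdeal K b).radical = Ideal.span (X '' Function.support b) := by
  refine le_antisymm ((isPrime_span_X_image _).radical_le_iff.2 (Ideal.span_le.2 ?_))
    (Ideal.span_le.2 ?_)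
  · rintro _ ⟨i, hi, rfl⟩
    exact Ideal.pow_mem_of_mem _
      (Ideal.subset_span (Set.mem_image_of_mem X (Nat.one_le_iff_ne_zero.1 hi))) _ hi
  · rintro _ ⟨i, hi, rfl⟩
    exact Ideal.mem_radical_iff.2 ⟨b i, X_pow_mem_irredIdeal hi le_rfl⟩

theorem support_subset_of_irredIdeal_le {b : Fin s → ℕ} {C : Set (Fin s)}
    (h : irredIdeal K b ≤ Ideal.span (X '' C)) : Function.support b ⊆ C := fun _ hi =>
  X_mem_span_X_image_iff.1
    ((isPrime_span_X_image C).mem_of_pow_mem _ (h (X_pow_mem_irredIdeal hi le_rfl)))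

theorem contractAt_irredIdeal_pow {b : Fin s → ℕ} {C : Set (Fin s)}
    (hb : Function.support b ⊆ C) (n : ℕ) :
    contractAt (irredIdeal K b ^ n) _ (isPrime_span_X_image C) = irredIdeal K b ^ n := by
  obtain ⟨G, hG, hpow⟩ := exists_monomialIdeal_eq_pow (R := K) (C := C)
    (G := (fun i => Finsupp.single i (b i)) '' Function.support b) (by
      rintro _ ⟨i, hi, rfl⟩
      refine (Finsupp.mem_supported' _ _).2 fun k hk => ?_
      simp only [Finsupp.single_apply, ite_eq_right_iff]
      rintro rfl
      exact absurd (hb hi) hk)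
    n
  rw [irredIdeal_eq_monomialIdeal, hpow]
  exact contractAt_monomialIdeal hG

theorem exists_component_eq_of_contractAt_eq {m : ℕ} {I : Ideal (MvPolynomial (Fin s) K)}
    {α : Fin m → Fin s → ℕ} (hdec : I = ⨅ i, irredIdeal K (α i))
    (hirr : ∀ j, I ≠ ⨅ i ∈ ({j}ᶜ : Set (Fin m)), irredIdeal K (α i))
    {C : Set (Fin s)} {b : Fin s → ℕ}
    (hb : contractAt I _ (isPrime_span_X_image C) = irredIdeal K b) :
    ∃ j, irredIdeal K (α j) = irredIdeal K b ∧
      ∀ i, irredIdeal K (α i) ≤ Ideal.span (X '' C) ↔ i = j := by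
  set S := {i | irredIdeal K (α i) ≤ Ideal.span (X '' C)}
  have hcon : contractAt I _ (isPrime_span_X_image C) = ⨅ i ∈ S, irredIdeal K (α i) := by
    rw [hdec, contractAt_iInf]
    refine iInf_congr fun i => ?_
    by_cases hi : i ∈ S
    · rw [iInf_pos hi]
      simpa using contractAt_irredIdeal_pow (support_subset_of_irredIdeal_le hi) 1
    · rw [iInf_neg hi, contractAt_eq_top_of_not_le _ hi]
  rw [hcon] at hb
  obtain ⟨j, hjS, hj⟩ := exists_irredIdeal_le_of_biInf_le S.toFinite hb.le
  have hle : ∀ i ∈ S, irredIdeal K b ≤ irredIdeal K (α i) := fun i hi => hb ▸ iInf₂_le i hi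
  exact ⟨j, le_antisymm hj (hle j hjS), fun i =>
    ⟨fun hi => (eq_of_le_of_forall_ne_biInf hdec hirr (hj.trans (hle i hi))).symm,
      fun h => h ▸ hjS⟩⟩

end irredIdeal

namespace WOGraph

variable {s : ℕ} (D : WOGraph s) {K : Type*} [Field K]

theorem X_mul_X_pow_mem_edgeIdeal {e : Fin s × Fin s} (he : e ∈ D.E) :
    X e.1 * X e.2 ^ D.w e.2 ∈ D.edgeIdeal K :=
  Ideal.subset_span ⟨e, he, rfl⟩

theorem edgeIdeal_le_span_X_iff {C : Set (Fin s)} :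
    D.edgeIdeal K ≤ Ideal.span (X '' C) ↔ ∀ e ∈ D.E, e.1 ∈ C ∨ e.2 ∈ C := by
  have hP := isPrime_span_X_image (R := K) C
  refine ⟨fun h e he => ?_, fun h => Ideal.span_le.2 ?_⟩
  · rcases hP.mem_or_mem (h (D.X_mul_X_pow_mem_edgeIdeal he)) with h1 | h2
    · exact Or.inl (X_mem_span_X_image_iff.1 h1)
    · exact Or.inr (X_mem_span_X_image_iff.1 (hP.mem_of_pow_mem _ h2))
  · rintro _ ⟨e, he, rfl⟩
    rcases h e he with h1 | h2
    · exact Ideal.mul_mem_right _ _ (Ideal.subset_span (Set.mem_image_of_mem X h1))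
    · exact Ideal.mul_mem_left _ _
        (Ideal.pow_mem_of_mem _ (Ideal.subset_span (Set.mem_image_of_mem X h2)) _ (D.w_pos e.2))

/-- Otherwise `C \ {j}` is still a vertex cover, and `P_{C \ {j}} ⊊ P_C` a smaller prime over
`I(D)`. -/
theorem exists_neighbor_not_mem_of_mem_minimalPrimes {C : Set (Fin s)}
    (hC : Ideal.span (X '' C) ∈ (D.edgeIdeal K).minimalPrimes) {j : Fin s} (hj : j ∈ C) :
    ∃ k ∉ C, (j, k) ∈ D.E ∨ (k, j) ∈ D.E := by
  by_contra! h
  have hcov : ∀ e ∈ D.E, e.1 ∈ C \ {j} ∨ e.2 ∈ C \ {j} := by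
    rintro ⟨a, b⟩ he
    have hab := D.edgeIdeal_le_span_X_iff.1 hC.1.2 _ he
    simp only [Set.mem_sdiff, Set.mem_singleton_iff] at hab ⊢
    by_cases ha : a = j
    · subst ha
      have hb : b ∈ C := by_contra fun hb => (h b hb).1 he
      exact Or.inr ⟨hb, fun hba => D.no_loops a (hba ▸ he)⟩
    · by_cases hb : b = j
      · subst hb
        exact Or.inl ⟨by_contra fun ha' => (h a ha').2 he, ha⟩
      · tauto
  have hle := hC.2 ⟨isPrime_span_X_image _, D.edgeIdeal_le_span_X_iff.2 hcov⟩
    (Ideal.span_mono (Set.image_mono Set.sdiff_subset))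
  exact (X_mem_span_X_image_iff.1 (hle (Ideal.subset_span (Set.mem_image_of_mem X hj)))).2 rfl

/-- The exponent vector of the irreducible ideal `I_C` of a vertex cover `C`: the variable `t_j`
for `j ∈ C` with an out-neighbour outside `C`, and `t_j ^ w_j` for the other `j ∈ C`. -/
noncomputable def coverExponent (C : Set (Fin s)) (j : Fin s) : ℕ :=
  open Classical in if j ∉ C then 0 else if ∃ k ∉ C, (j, k) ∈ D.E then 1 else D.w j

theorem support_coverExponent (C : Set (Fin s)) : Function.support (D.coverExponent C) = C := by
  ext j
  by_cases hj : j ∈ C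
  · have := D.w_pos j
    simp only [coverExponent, hj, not_true_eq_false, if_false, Function.mem_support, iff_true]
    split_ifs <;> omega
  · simp [coverExponent, hj]

theorem coverExponent_le_weight (C : Set (Fin s)) (j : Fin s) : D.coverExponent C j ≤ D.w j := by
  have := D.w_pos j
  unfold coverExponent
  split_ifs <;> omega

theorem coverExponent_eq_one {C : Set (Fin s)} {j k : Fin s} (hj : j ∈ C) (hk : k ∉ C)
    (he : (j, k) ∈ D.E) : D.coverExponent C j = 1 := by
  simp only [coverExponent, hj, not_true_eq_false, if_false]
  exact if_pos ⟨k, hk, he⟩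

theorem coverExponent_eq_weight {C : Set (Fin s)} {j : Fin s} (hj : j ∈ C)
    (h : ∀ k ∉ C, (j, k) ∉ D.E) : D.coverExponent C j = D.w j := by
  simp only [coverExponent, hj, not_true_eq_false, if_false]
  exact if_neg fun ⟨k, hk, he⟩ => h k hk he

theorem edgeIdeal_le_irredIdeal_coverExponent {C : Set (Fin s)}
    (hcov : ∀ e ∈ D.E, e.1 ∈ C ∨ e.2 ∈ C) :
    D.edgeIdeal K ≤ irredIdeal K (D.coverExponent C) := by
  refine Ideal.span_le.2 ?_
  rintro _ ⟨⟨a, b⟩, he, rfl⟩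
  by_cases hb : b ∈ C
  · refine Ideal.mul_mem_left _ _ (X_pow_mem_irredIdeal ?_ (D.coverExponent_le_weight C b))
    rwa [← Function.mem_support, support_coverExponent]
  · have h1 := D.coverExponent_eq_one ((hcov _ he).resolve_right hb) hb he
    simpa using Ideal.mul_mem_right (X b ^ D.w b) _
      (X_pow_mem_irredIdeal (K := K) (k := 1) (h1 ▸ one_ne_zero) h1.le)

/-- Localizing at `P_C` inverts the variables outside `C`, so each generator of `I_C` becomes a
multiple of an edge generator by a unit. -/
theorem irredIdeal_coverExponent_le_contractAt {C : Set (Fin s)}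
    (hnbr : ∀ j ∈ C, ∃ k ∉ C, (j, k) ∈ D.E ∨ (k, j) ∈ D.E) :
    irredIdeal K (D.coverExponent C) ≤
      contractAt (D.edgeIdeal K) _ (isPrime_span_X_image C) := by
  have hX : ∀ k ∉ C, ∀ n, (X k ^ n : MvPolynomial (Fin s) K) ∉ Ideal.span (X '' C) :=
    fun k hk n h => hk (X_mem_span_X_image_iff.1 ((isPrime_span_X_image C).mem_of_pow_mem _ h))
  refine Ideal.span_le.2 ?_
  rintro _ ⟨j, hj, rfl⟩
  have hjC : j ∈ C := by
    rw [← D.support_coverExponent C]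
    exact Nat.one_le_iff_ne_zero.1 hj
  rw [SetLike.mem_coe, mem_contractAt_iff]
  by_cases hout : ∃ k ∉ C, (j, k) ∈ D.E
  · obtain ⟨k, hk, he⟩ := hout
    refine ⟨X k ^ D.w k, hX k hk _, ?_⟩
    rw [D.coverExponent_eq_one hjC hk he, pow_one, mul_comm]
    exact D.X_mul_X_pow_mem_edgeIdeal (e := (j, k)) he
  · push Not at hout
    obtain ⟨k, hk, he⟩ := hnbr j hjC
    refine ⟨X k ^ 1, hX k hk 1, ?_⟩
    rw [D.coverExponent_eq_weight hjC hout, pow_one]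
    exact D.X_mul_X_pow_mem_edgeIdeal (e := (k, j)) (he.resolve_left (hout k hk))

theorem contractAt_edgeIdeal_pow {C : Set (Fin s)}
    (hC : Ideal.span (X '' C) ∈ (D.edgeIdeal K).minimalPrimes) (n : ℕ) :
    contractAt (D.edgeIdeal K ^ n) _ (isPrime_span_X_image C) =
      irredIdeal K (D.coverExponent C) ^ n := by
  have hcov := D.edgeIdeal_le_span_X_iff.1 hC.1.2
  refine le_antisymm ?_ ?_
  · calc contractAt (D.edgeIdeal K ^ n) _ _
        ≤ contractAt (irredIdeal K (D.coverExponent C) ^ n) _ _ :=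
          contractAt_mono _ (Ideal.pow_right_mono (D.edgeIdeal_le_irredIdeal_coverExponent hcov) n)
      _ = _ := contractAt_irredIdeal_pow (D.support_coverExponent C).le n
  · exact (Ideal.pow_right_mono (D.irredIdeal_coverExponent_le_contractAt fun j hj =>
      D.exists_neighbor_not_mem_of_mem_minimalPrimes hC hj) n).trans (pow_contractAt_le _ _ n)

theorem exists_component_contractAt_edgeIdeal_pow_eq {m : ℕ} {α : Fin m → Fin s → ℕ}
    (hdec : D.edgeIdeal K = ⨅ i, irredIdeal K (α i))
    (hirr : ∀ j, D.edgeIdeal K ≠ ⨅ i ∈ ({j}ᶜ : Set (Fin m)), irredIdeal K (α i))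
    {p : Ideal (MvPolynomial (Fin s) K)} (hp : p ∈ (D.edgeIdeal K).minimalPrimes) :
    ∃ j, (∀ i, (irredIdeal K (α i)).radical = p ↔ i = j) ∧
      ∀ n, contractAt (D.edgeIdeal K ^ n) p hp.1.1 = irredIdeal K (α j) ^ n := by
  have hrad : ∀ i, (irredIdeal K (α i)).radical = p ↔ irredIdeal K (α i) ≤ p := fun i =>
    Ideal.radical_eq_iff_le_of_mem_minimalPrimes hp (hdec ▸ iInf_le _ i)
      (by rw [radical_irredIdeal]; exact isPrime_span_X_image _)
  have hinf : (Finset.univ : Finset (Fin m)).inf (fun i => irredIdeal K (α i)) ≤ p := by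
    rw [Finset.inf_univ_eq_iInf, ← hdec]
    exact hp.1.2
  obtain ⟨j₀, -, hj₀⟩ := hp.1.1.inf_le'.1 hinf
  obtain rfl : Ideal.span (X '' Function.support (α j₀)) = p :=
    (radical_irredIdeal _).symm.trans ((hrad j₀).2 hj₀)
  obtain ⟨j, hj_eq, hj_unique⟩ :=
    exists_component_eq_of_contractAt_eq hdec hirr (by simpa using D.contractAt_edgeIdeal_pow hp 1)
  exact ⟨j, fun i => (hrad i).trans (hj_unique i), fun n => by
    rw [D.contractAt_edgeIdeal_pow hp, hj_eq]⟩

end WOGraph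

theorem exists_unique_component_and_symbolicPower_eq_general {s m : ℕ} (K : Type*) [Field K]
    (D : WOGraph s) (α : Fin m → (Fin s → ℕ))
    (hdec : D.edgeIdeal K = ⨅ i, irredIdeal K (α i))
    (hirr : ∀ j : Fin m,
      D.edgeIdeal K ≠ ⨅ i ∈ ({j}ᶜ : Set (Fin m)), irredIdeal K (α i)) :
    ∃ f : (D.edgeIdeal K).minimalPrimes → Fin m,
      (∀ p : (D.edgeIdeal K).minimalPrimes,
        (irredIdeal K (α (f p))).radical = (p : Ideal (MvPolynomial (Fin s) K))) ∧
      (∀ p : (D.edgeIdeal K).minimalPrimes, ∀ i : Fin m,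
        (irredIdeal K (α i)).radical = (p : Ideal (MvPolynomial (Fin s) K)) → i = f p) ∧
      (∀ n : ℕ, 1 ≤ n → symbolicPower (D.edgeIdeal K) n =
        ⨅ p : (D.edgeIdeal K).minimalPrimes, irredIdeal K (α (f p)) ^ n) := by
  choose f hf hpow using fun p : (D.edgeIdeal K).minimalPrimes =>
    D.exists_component_contractAt_edgeIdeal_pow_eq hdec hirr p.2
  refine ⟨f, fun p => (hf p (f p)).2 rfl, fun p i => (hf p i).1, fun n _ => ?_⟩
  rw [symbolicPower, iInf_subtype']
  exact iInf_congr fun p => hpow p n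

/-- **Lemma.** Let `D` be a weighted oriented graph with edge ideal `I(D)` and
(irredundant) irreducible decomposition `I(D) = q_{α_1} ∩ ⋯ ∩ q_{α_m}`. For each minimal
prime `p` of `I(D)` there is exactly one irreducible component `q` with `rad(q) = p`,
and `I(D)^{(n)}` is the intersection of the `n`-th powers of these components, for all
`n ≥ 1`. -/
theorem exists_unique_component_and_symbolicPower_eq {s m : ℕ} (K : Type*) [Field K]
    (D : WOGraph s) (α : Fin m → (Fin s → ℕ)) (hα : ∀ i, α i ≠ 0)
    (hdec : D.edgeIdeal K = ⨅ i, irredIdeal K (α i))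
    (hirr : ∀ j : Fin m,
      D.edgeIdeal K ≠ ⨅ i ∈ ({j}ᶜ : Set (Fin m)), irredIdeal K (α i)) :
    ∃ f : (D.edgeIdeal K).minimalPrimes → Fin m,
      (∀ p : (D.edgeIdeal K).minimalPrimes,
        (irredIdeal K (α (f p))).radical = (p : Ideal (MvPolynomial (Fin s) K))) ∧
      (∀ p : (D.edgeIdeal K).minimalPrimes, ∀ i : Fin m,
        (irredIdeal K (α i)).radical = (p : Ideal (MvPolynomial (Fin s) K)) → i = f p) ∧
      (∀ n : ℕ, 1 ≤ n → symbolicPower (D.edgeIdeal K) n =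
        ⨅ p : (D.edgeIdeal K).minimalPrimes, irredIdeal K (α (f p)) ^ n) :=
  exists_unique_component_and_symbolicPower_eq_general K D α hdec hirr
end

section
/- Let D be a weighted oriented graph with at least one edge and let J(D) = ⋂_{(t_i,t_j) ∈ E(D)} (t_i, t_j^{w_j}) be the Alexander dual of the edge ideal I(D). Then J(D)^n = J(D)^{(n)} for all n ≥ 1 if and only if J(D) is a normal ideal and NP(J(D)) = IP(J(D)), where IP(J(D)) = {x ∈ ℝ^s : x ≥ 0 and x_i + w_j^{-1} x_j ≥ 1 for every (t_i, t_j) ∈ E(D)}. -/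
open MvPolynomial Pointwise

/-- The integral closure of a monomial ideal `J`:
the ideal `({t^a : (t^a)^p ∈ J^p for some integer p ≥ 1})`. -/
noncomputable def monIntegralClosure {s : ℕ} (K : Type*) [Field K]
    (J : Ideal (MvPolynomial (Fin s) K)) : Ideal (MvPolynomial (Fin s) K) :=
  Ideal.span { f | ∃ a : Fin s →₀ ℕ, f = monomial a (1 : K) ∧
    ∃ p : ℕ, 1 ≤ p ∧ (monomial a (1 : K)) ^ p ∈ J ^ p }

/-- The Alexander dual `J(D) = ⋂_{(t_i,t_j) ∈ E(D)} (t_i, t_j^{w_j})` of the edge ideal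
of a weighted oriented graph `D`. -/
noncomputable def alexDual {s : ℕ} (K : Type*) [Field K] (D : WOGraph s) :
    Ideal (MvPolynomial (Fin s) K) :=
  ⨅ e ∈ D.E, Ideal.span {X e.1, X e.2 ^ D.w e.2}

/-! Localizing `J(D)` at a minimal prime `(tᵢ, tⱼ)` kills every irreducible component except
`(tᵢ, tⱼ^{wⱼ})`, whose powers are `(tᵢ, tⱼ)`-primary; hence `J(D)^{(n)} = ⋂ (tᵢ, tⱼ^{wⱼ})ⁿ` and
`tᵃ ∈ J(D)^{(n)}` iff `a / n ∈ IP(J(D))`. On the other side `tᵃ ∈ J(D)ⁿ` puts `a / n` into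
`NP(J(D))`, and conversely a rational point `a / n` of `NP(J(D))` is a rational convex combination
of lattice points, so some `t^{pa}` lies in `J(D)^{np}` and `tᵃ` is integral over `J(D)ⁿ`.
Comparing monomials, `J(D)ⁿ = J(D)^{(n)}` gives normality (symbolic powers are integrally closed)
and `IP ⊆ NP` (each `x ∈ IP` is the limit of the points `⌈m x⌉ / m` of `IP`); conversely,
normality and `NP = IP` put `J(D)^{(n)}` inside the integral closure of `J(D)ⁿ`, which is `J(D)ⁿ`.
-/

namespace MvPolynomial

variable {σ R : Type*} [CommSemiring R]

theorem mem_of_forall_monomial_mem {I : Ideal (MvPolynomial σ R)} {f : MvPolynomial σ R}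
    (h : ∀ m ∈ f.support, monomial m 1 ∈ I) : f ∈ I := by
  rw [f.as_sum]
  refine Ideal.sum_mem _ fun m hm => ?_
  simpa [C_mul_monomial] using I.mul_mem_left (C (f.coeff m)) (h m hm)

theorem span_range_monomial_pow {ι : Type*} [Fintype ι] (v : ι → σ →₀ ℕ) (n : ℕ) :
    Ideal.span (Set.range fun j => monomial (v j) (1 : R)) ^ n =
      Ideal.span ((monomial · 1) '' {b | ∃ k : ι → ℕ, ∑ j, k j = n ∧ ∑ j, k j • v j = b}) := by
  classical
  rw [Ideal.span, Submodule.span_pow, ← Set.image_univ, Finsupp.image_pow_eq_finsuppProd_image]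
  congr 1
  ext f
  simp only [Set.subset_univ, and_true, Set.mem_image, Set.mem_ofPred_eq]
  constructor
  · rintro ⟨k, rfl, rfl⟩
    refine ⟨_, ⟨k, (Finsupp.degree_eq_sum k).symm, rfl⟩, ?_⟩
    simp [Finsupp.prod_fintype, monomial_pow, ← monomial_sum_one]
  · rintro ⟨_, ⟨k, rfl, rfl⟩, rfl⟩
    refine ⟨Finsupp.equivFunOnFinite.symm k, by simp [Finsupp.degree_eq_sum], ?_⟩
    simp [Finsupp.prod_fintype, monomial_pow, ← monomial_sum_one]

theorem mem_span_range_monomial_pow_iff {ι : Type*} [Fintype ι] {v : ι → σ →₀ ℕ} {n : ℕ}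
    {f : MvPolynomial σ R} :
    f ∈ Ideal.span (Set.range fun j => monomial (v j) (1 : R)) ^ n ↔
      ∀ m ∈ f.support, ∃ k : ι → ℕ, ∑ j, k j = n ∧ ∑ j, k j • v j ≤ m := by
  simp [span_range_monomial_pow, mem_ideal_span_monomial_image]

theorem monomial_mem_span_range_monomial_pow_iff [Nontrivial R] {ι : Type*} [Fintype ι]
    {v : ι → σ →₀ ℕ} {n : ℕ} {a : σ →₀ ℕ} :
    monomial a (1 : R) ∈ Ideal.span (Set.range fun j => monomial (v j) (1 : R)) ^ n ↔
      ∃ k : ι → ℕ, ∑ j, k j = n ∧ ∑ j, k j • v j ≤ a := by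
  classical
  rw [mem_span_range_monomial_pow_iff, support_monomial, if_neg one_ne_zero]
  simp

theorem mem_span_X_X_pow_pow_iff {i j : σ} (hij : i ≠ j) {w n : ℕ} {f : MvPolynomial σ R} :
    f ∈ Ideal.span {X i, X j ^ w} ^ n ↔ ∀ m ∈ f.support, n * w ≤ w * m i + m j := by
  classical
  have hspan : ({X i, X j ^ w} : Set (MvPolynomial σ R)) =
      Set.range fun t => monomial (![Finsupp.single i 1, Finsupp.single j w] t) 1 := by
    ext
    simp [Fin.exists_fin_two, eq_comm, X, monomial_pow]
  rw [hspan, mem_span_range_monomial_pow_iff]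
  refine forall₂_congr fun m _ => ?_
  simp only [Fin.sum_univ_two, Matrix.cons_val_zero, Matrix.cons_val_one]
  constructor
  · rintro ⟨k, rfl, hk⟩
    have hi := hk i
    have hj := hk j
    simp [hij, hij.symm] at hi hj
    nlinarith
  · intro h
    have hj : (n - min (m i) n) * w ≤ m j := by
      rcases le_total n (m i) with hn | hn
      · simp [min_eq_right hn]
      · rw [min_eq_left hn, Nat.sub_mul, mul_comm (m i)]
        omega
    refine ⟨![min (m i) n, n - min (m i) n], by simp, fun l => ?_⟩
    by_cases hli : l = i
    · subst hli
      simp [hij]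
    · by_cases hlj : l = j
      · subst hlj
        simpa [hli, Ne.symm hli] using hj
      · simp [Ne.symm hli, Ne.symm hlj]

theorem span_X_X_pow_le {i j : σ} {w : ℕ} (hw : 1 ≤ w) :
    (Ideal.span {X i, X j ^ w} : Ideal (MvPolynomial σ R)) ≤ Ideal.span {X i, X j} := by
  rw [Ideal.span_le, Set.insert_subset_iff, Set.singleton_subset_iff]
  exact ⟨Ideal.subset_span (Set.mem_insert _ _), Ideal.pow_mem_of_mem _
    (Ideal.subset_span (Set.mem_insert_of_mem _ (Set.mem_singleton (X j)))) w hw⟩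

theorem X_mem_span_X_X_iff [Nontrivial R] {i j k : σ} :
    (X k : MvPolynomial σ R) ∈ Ideal.span {X i, X j} ↔ k = i ∨ k = j := by
  classical
  rw [← Set.image_pair, mem_ideal_span_X_image]
  simp [support_X, Finsupp.single_apply]

theorem exists_mem_support_of_notMem_span_X_X {i j : σ} {c : MvPolynomial σ R}
    (hc : c ∉ Ideal.span {X i, X j}) : ∃ m ∈ c.support, m i = 0 ∧ m j = 0 := by
  rw [← Set.image_pair, mem_ideal_span_X_image] at hc
  simpa using hc

theorem weight_single_add_single [DecidableEq σ] (i j : σ) (a b : ℕ) (m : σ →₀ ℕ) :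
    Finsupp.weight (Pi.single i a + Pi.single j b) m = a * m i + b * m j := by
  have hi := Finsupp.weight_single_index i a m
  have hj := Finsupp.weight_single_index j b m
  simp only [Finsupp.weight_apply, smul_eq_mul] at hi hj ⊢
  simp only [Pi.add_apply, mul_add, Finsupp.sum_add, hi, hj, mul_comm]

theorem natCast_le_weightedOrder_coe_iff (ω : σ → ℕ) {N : ℕ} {f : MvPolynomial σ R} :
    (N : ℕ∞) ≤ (f : MvPowerSeries σ R).weightedOrder ω ↔
      ∀ m ∈ f.support, N ≤ Finsupp.weight ω m := by
  constructor
  · intro h m hm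
    have := h.trans (MvPowerSeries.weightedOrder_le ω (by rwa [coeff_coe, ← mem_support_iff]))
    exact_mod_cast this
  · refine fun h => MvPowerSeries.nat_le_weightedOrder ω fun m hm => ?_
    rw [coeff_coe, ← notMem_support_iff]
    exact fun hm' => (h m hm').not_gt hm

theorem forall_le_weight_of_mul [NoZeroDivisors R] (ω : σ → ℕ) {N : ℕ}
    {c x : MvPolynomial σ R} (hc : ∃ m ∈ c.support, Finsupp.weight ω m = 0)
    (hcx : ∀ m ∈ (c * x).support, N ≤ Finsupp.weight ω m) :
    ∀ m ∈ x.support, N ≤ Finsupp.weight ω m := by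
  obtain ⟨m, hm, hm0⟩ := hc
  have hc0 : (c : MvPowerSeries σ R).weightedOrder ω = 0 := by
    have := MvPowerSeries.weightedOrder_le ω (by rwa [coeff_coe, ← mem_support_iff] : _ ≠ (0 : R))
    rw [hm0] at this
    exact nonpos_iff_eq_zero.1 (mod_cast this)
  rw [← natCast_le_weightedOrder_coe_iff, coe_mul, MvPowerSeries.weightedOrder_mul, hc0,
    zero_add] at hcx
  rwa [← natCast_le_weightedOrder_coe_iff]

/-- `(X i, X j ^ w) ^ n` is cut out by the weight `w • eᵢ + eⱼ`, and a polynomial outside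
`(X i, X j)` has a monomial of weight `0`. -/
theorem mem_span_X_X_pow_pow_of_mul_mem [NoZeroDivisors R] {i j : σ} (hij : i ≠ j) {w n : ℕ}
    {c x : MvPolynomial σ R} (hc : c ∉ Ideal.span {X i, X j})
    (hcx : c * x ∈ Ideal.span {X i, X j ^ w} ^ n) : x ∈ Ideal.span {X i, X j ^ w} ^ n := by
  classical
  have hweight (m : σ →₀ ℕ) :
      w * m i + m j = Finsupp.weight (Pi.single i w + Pi.single j 1) m := by
    rw [weight_single_add_single, one_mul]
  rw [mem_span_X_X_pow_pow_iff hij] at hcx ⊢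
  simp only [hweight] at hcx ⊢
  obtain ⟨m, hm, hmi, hmj⟩ := exists_mem_support_of_notMem_span_X_X hc
  exact forall_le_weight_of_mul _ ⟨m, hm, by simp [← hweight, hmi, hmj]⟩ hcx

theorem isPrime_span_X_X [NoZeroDivisors R] [Nontrivial R] {i j : σ} (hij : i ≠ j) :
    (Ideal.span {X i, X j} : Ideal (MvPolynomial σ R)).IsPrime := by
  have hspan : (Ideal.span {X i, X j} : Ideal (MvPolynomial σ R)) =
      Ideal.span {X i, X j ^ 1} ^ 1 := by
    rw [pow_one, pow_one]
  refine Ideal.isPrime_iff.2 ⟨?_, fun {f g} hfg => or_iff_not_imp_left.2 fun hf => ?_⟩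
  · rw [Ideal.ne_top_iff_one, ← Set.image_pair, mem_ideal_span_X_image]
    simp
  · rw [hspan] at hfg ⊢
    exact mem_span_X_X_pow_pow_of_mul_mem hij hf hfg

end MvPolynomial

theorem span_monomial_image_le_monIntegralClosure {s : ℕ} (K : Type*) [Field K]
    (S : Set (Fin s →₀ ℕ)) :
    Ideal.span ((monomial · (1 : K)) '' S) ≤
      monIntegralClosure K (Ideal.span ((monomial · (1 : K)) '' S)) :=
  Ideal.span_le.2 <| Set.image_subset_iff.2 fun a ha =>
    Ideal.subset_span ⟨a, rfl, 1, le_rfl, by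
      simpa using Ideal.subset_span (Set.mem_image_of_mem (monomial · (1 : K)) ha)⟩

theorem monomial_mem_monIntegralClosure {s : ℕ} {K : Type*} [Field K]
    {J : Ideal (MvPolynomial (Fin s) K)} {a : Fin s →₀ ℕ} {p : ℕ} (hp : p ≠ 0)
    (h : monomial (p • a) (1 : K) ∈ J ^ p) : monomial a 1 ∈ monIntegralClosure K J :=
  Ideal.subset_span ⟨a, rfl, p, Nat.one_le_iff_ne_zero.2 hp, by rwa [monomial_pow, one_pow]⟩

section Contraction

variable {R : Type*} [CommRing R]

theorem contractAt_eq_self {Q P : Ideal R} (hP : P.IsPrime)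
    (hQ : ∀ c ∉ P, ∀ x, c * x ∈ Q → x ∈ Q) : contractAt Q P hP = Q := by
  refine le_antisymm (fun x hx => ?_) Ideal.le_comap_map
  obtain ⟨c, hc, hcx⟩ :=
    (IsLocalization.algebraMap_mem_map_algebraMap_iff P.primeCompl _ Q x).1 hx
  exact hQ c hc x hcx

theorem contractAt_finsetInf_pow {ι : Type*} {s : Finset ι} {Q : ι → Ideal R} {e : ι}
    (he : e ∈ s) {P : Ideal R} (hP : P.IsPrime) (hQ : ∀ f ∈ s, f ≠ e → ¬ Q f ≤ P) (n : ℕ) :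
    contractAt (s.inf Q ^ n) P hP = contractAt (Q e ^ n) P hP := by
  have := hP
  have hmap : (s.inf Q).map (algebraMap R (Localization.AtPrime P)) =
      (Q e).map (algebraMap R (Localization.AtPrime P)) := by
    refine le_antisymm (Ideal.map_mono (Finset.inf_le he)) ?_
    rw [← IsLocalization.mapFrameHom_apply P.primeCompl _ (s.inf Q), map_finset_inf]
    refine Finset.le_inf fun f hf => ?_
    obtain rfl | hfe := eq_or_ne f e
    · exact le_rfl
    · simp [IsLocalization.AtPrime.map_eq_top_of_not_le _ (hQ f hf hfe)]
  simp only [contractAt, Ideal.map_pow, hmap]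

theorem pow_le_symbolicPower (I : Ideal R) (n : ℕ) : I ^ n ≤ symbolicPower I n :=
  le_iInf₂ fun _ _ => Ideal.le_comap_map

end Contraction

section Polyhedra

variable {σ ι : Type*}

def newtonPolyhedron (v : ι → σ →₀ ℕ) : Set (σ → ℝ) :=
  {x | 0 ≤ x} + convexHull ℝ (Set.range fun j i => (v j i : ℝ))

noncomputable def scaledExponent (a : σ →₀ ℕ) (n : ℕ) : σ → ℝ := fun i => a i / n

@[simp]
theorem scaledExponent_one (a : σ →₀ ℕ) : scaledExponent a 1 = fun i => (a i : ℝ) := by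
  ext i
  rw [scaledExponent, Nat.cast_one, div_one]

theorem scaledExponent_nsmul (a : σ →₀ ℕ) {n p : ℕ} (hp : p ≠ 0) :
    scaledExponent (p • a) (n * p) = scaledExponent a n := by
  ext i
  simp only [scaledExponent, Finsupp.smul_apply, smul_eq_mul, Nat.cast_mul]
  field_simp

theorem isClosed_newtonPolyhedron [Finite ι] (v : ι → σ →₀ ℕ) :
    IsClosed (newtonPolyhedron v) :=
  (isClosed_le continuous_const continuous_id).add_right_of_isCompact
    ((Set.finite_range _).isCompact_convexHull (𝕜 := ℝ))

theorem scaledExponent_mem_newtonPolyhedron [Fintype ι] {v : ι → σ →₀ ℕ} {a : σ →₀ ℕ}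
    {n : ℕ} (hn : n ≠ 0) {k : ι → ℕ} (hk : ∑ j, k j = n) (hka : ∑ j, k j • v j ≤ a) :
    scaledExponent a n ∈ newtonPolyhedron v := by
  set y : σ → ℝ := ∑ j, ((k j : ℝ) / n) • fun i => (v j i : ℝ)
  have hy : y ∈ convexHull ℝ (Set.range fun j i => (v j i : ℝ)) :=
    (convex_convexHull ℝ _).sum_mem (fun j _ => by positivity)
      (by rw [← Finset.sum_div, ← Nat.cast_sum, hk, div_self (by exact_mod_cast hn)])
      fun j _ => subset_convexHull ℝ _ ⟨j, rfl⟩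
  refine ⟨scaledExponent a n - y, fun i => ?_, y, hy, sub_add_cancel _ _⟩
  have hi : ((∑ j, k j • v j) i : ℝ) ≤ a i := by exact_mod_cast hka i
  simp only [Finsupp.coe_finsetSum, Finset.sum_apply, Finsupp.smul_apply, smul_eq_mul,
    Nat.cast_sum, Nat.cast_mul] at hi
  simp only [Pi.zero_apply, Pi.sub_apply, scaledExponent, y, Finset.sum_apply, Pi.smul_apply,
    smul_eq_mul, sub_nonneg, div_mul_eq_mul_div, ← Finset.sum_div]
  gcongr

/-- Carathéodory makes the real weights unique, and a `ℚ`-linear retraction `φ : ℝ → ℚ` turns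
them into another solution, so they are rational. -/
theorem exists_rat_weights_of_mem_convexHull {κ : Type*} [Fintype κ] {z : κ → σ → ℚ}
    {x : σ → ℚ} (h : (fun i => (x i : ℝ)) ∈ convexHull ℝ (Set.range fun k i => (z k i : ℝ))) :
    ∃ μ : κ → ℚ, (∀ k, 0 ≤ μ k) ∧ ∑ k, μ k = 1 ∧ ∑ k, μ k • z k = x := by
  classical
  obtain ⟨ι', _, y, w, hyz, hind, hpos, hw1, hwx⟩ := eq_pos_convex_span_of_mem_convexHull h
  choose g hg using fun i => hyz (Set.mem_range_self i)
  obtain ⟨φ, hφ⟩ := (Algebra.linearMap ℚ ℝ).exists_leftInverse_of_injective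
    (LinearMap.ker_eq_bot.2 Rat.cast_injective)
  have hφq (q : ℚ) : φ q = q := LinearMap.congr_fun hφ q
  have hφsum (q : ι' → ℚ) : φ (∑ i, w i * q i) = ∑ i, φ (w i) * q i := by
    simp [map_sum, mul_comm (w _), ← Rat.smul_def, mul_comm (φ _)]
  have hsum : ∑ i, φ (w i) = 1 := by
    have h := hφsum fun _ => 1
    simp only [mul_one, Rat.cast_one, hw1] at h
    rw [← h]
    simpa using hφq 1
  have hcomb (l : σ) : ∑ i, φ (w i) * z (g i) l = x l := by
    rw [← hφsum, ← hφq (x l)]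
    congr 1
    simpa [← hg] using congrFun hwx l
  have hφw (i : ι') : w i = φ (w i) := by
    refine hind.eq_of_sum_eq_sum (s := Finset.univ) (w₁ := w)
      (w₂ := fun i => (φ (w i) : ℝ)) ?_ ?_ i (Finset.mem_univ i)
    · rw [hw1, ← Rat.cast_sum, hsum, Rat.cast_one]
    · ext l
      have h := congrFun hwx l
      simp only [← hg, Finset.sum_apply, Pi.smul_apply, smul_eq_mul] at h ⊢
      rw [h]
      exact_mod_cast (hcomb l).symm
  refine ⟨fun k => ∑ i : {i // g i = k}, φ (w i), fun k => Finset.sum_nonneg fun i _ => ?_,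
    by rw [Fintype.sum_fiberwise g fun i => φ (w i), hsum], ?_⟩
  · exact_mod_cast (hφw i ▸ hpos i).le
  · calc ∑ k, (∑ i : {i // g i = k}, φ (w i)) • z k
        = ∑ k, ∑ i : {i // g i = k}, φ (w i) • z (g i) := by
          simp_rw [Finset.sum_smul]
          exact Finset.sum_congr rfl fun k _ => Finset.sum_congr rfl fun i _ => by rw [i.2]
      _ = x := by
          rw [Fintype.sum_fiberwise g fun i => φ (w i) • z (g i)]
          ext l
          simpa using hcomb l

theorem exists_natCast_eq_mul_of_nonneg {κ : Type*} [Fintype κ] {μ : κ → ℚ}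
    (hμ : ∀ k, 0 ≤ μ k) : ∃ p : ℕ, p ≠ 0 ∧ ∃ c : κ → ℕ, ∀ k, (c k : ℚ) = p * μ k := by
  refine ⟨∏ k, (μ k).den, Finset.prod_ne_zero_iff.2 fun k _ => (μ k).den_ne_zero, ?_⟩
  choose t ht using fun k => Finset.dvd_prod_of_mem (fun k => (μ k).den) (Finset.mem_univ k)
  refine ⟨fun k => t k * (μ k).num.toNat, fun k => ?_⟩
  have hnum : ((μ k).num.toNat : ℚ) = (μ k).num := by
    exact_mod_cast Int.toNat_of_nonneg (Rat.num_nonneg.2 (hμ k))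
  rw [ht k, Nat.cast_mul, hnum, ← Rat.mul_den_eq_num, Nat.cast_mul]
  ring

theorem mem_convexHull_single_of_sum_lt [Fintype σ] [DecidableEq σ] {r : σ → ℝ} (hr : 0 ≤ r)
    {N : ℕ} (hN : ∑ i, r i < N) :
    r ∈ convexHull ℝ (Set.range fun o : Option σ => fun i =>
      ((o.elim 0 fun l => Finsupp.single l N : σ →₀ ℕ) i : ℝ)) := by
  have hN0 : (0 : ℝ) < N := (Finset.sum_nonneg fun i _ => hr i).trans_lt hN
  refine mem_convexHull_of_exists_fintype
    (fun o => o.elim (1 - ∑ i, r i / N) fun i => r i / N) _ ?_ ?_ (fun o => ⟨o, rfl⟩) ?_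
  · rintro (_ | i)
    · simp only [Option.elim_none, sub_nonneg, ← Finset.sum_div]
      exact (div_le_one hN0).2 hN.le
    · exact div_nonneg (hr i) hN0.le
  · simp [Fintype.sum_option]
  · ext l
    simp [Fintype.sum_option, Finsupp.single_apply, hN0.ne']

theorem exists_mem_convexHull_of_mem_newtonPolyhedron [Fintype σ] [DecidableEq σ]
    {v : ι → σ →₀ ℕ} {x : σ → ℝ} (hx : x ∈ newtonPolyhedron v) :
    ∃ N : ℕ, x ∈ convexHull ℝ (Set.range fun jo : ι × Option σ => fun i =>
      ((v jo.1 + jo.2.elim 0 fun l => Finsupp.single l N) i : ℝ)) := by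
  obtain ⟨r, hr, y, hy, rfl⟩ := hx
  obtain ⟨N, hN⟩ := exists_nat_gt (∑ i, r i)
  have hry := Set.add_mem_add (mem_convexHull_single_of_sum_lt hr hN) hy
  rw [← convexHull_add] at hry
  refine ⟨N, convexHull_mono ?_ hry⟩
  rintro _ ⟨_, ⟨o, rfl⟩, _, ⟨j, rfl⟩, rfl⟩
  exact ⟨(j, o), by ext; simp [add_comm]⟩

theorem exists_sum_nsmul_le_of_mem_newtonPolyhedron [Fintype σ] [Fintype ι]
    {v : ι → σ →₀ ℕ} {a : σ →₀ ℕ} {n : ℕ} (hn : n ≠ 0)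
    (h : scaledExponent a n ∈ newtonPolyhedron v) :
    ∃ p ≠ 0, ∃ k : ι → ℕ, ∑ j, k j = n * p ∧ ∑ j, k j • v j ≤ p • a := by
  classical
  obtain ⟨N, hN⟩ := exists_mem_convexHull_of_mem_newtonPolyhedron h
  set z : ι × Option σ → σ →₀ ℕ := fun jo => v jo.1 + jo.2.elim 0 fun l => Finsupp.single l N
  obtain ⟨μ, hμ0, hμ1, hμz⟩ := exists_rat_weights_of_mem_convexHull
    (x := fun i => (a i : ℚ) / n) (z := fun jo i => (z jo i : ℚ))
    (by convert hN using 2 <;> simp [scaledExponent, z])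
  obtain ⟨p, hp, c, hc⟩ := exists_natCast_eq_mul_of_nonneg hμ0
  have hcp : ∑ jo, c jo = p := by
    exact_mod_cast (by simp [hc, ← Finset.mul_sum, hμ1] : ∑ jo, (c jo : ℚ) = p)
  have hcz : ∑ jo, (n * c jo) • z jo = p • a := by
    ext i
    have h := congrFun hμz i
    simp only [Finset.sum_apply, Pi.smul_apply, smul_eq_mul] at h
    have hq : ∑ jo, ((n * c jo : ℕ) : ℚ) * z jo i = p * a i := by
      simp only [Nat.cast_mul, hc, mul_assoc, ← Finset.mul_sum, h]
      field_simp
    simpa using (by exact_mod_cast hq : ∑ jo, n * c jo * z jo i = p * a i)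
  refine ⟨p, hp, fun j => ∑ o, n * c (j, o), ?_, ?_⟩
  · simp_rw [← Finset.mul_sum]
    rw [← Fintype.sum_prod_type', hcp]
  · calc ∑ j, (∑ o, n * c (j, o)) • v j = ∑ jo, (n * c jo) • v jo.1 := by
          rw [Fintype.sum_prod_type]
          simp only [Finset.sum_smul]
      _ ≤ ∑ jo, (n * c jo) • z jo :=
          Finset.sum_le_sum fun jo _ => nsmul_le_nsmul_right le_self_add _
      _ = p • a := hcz

theorem le_scaledExponent_ceil [Finite σ] (x : σ → ℝ) {m : ℕ} (hm : m ≠ 0) :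
    x ≤ scaledExponent (Finsupp.equivFunOnFinite.symm fun i => ⌈m * x i⌉₊) m := fun i => by
  rw [scaledExponent, Finsupp.coe_equivFunOnFinite_symm, le_div_iff₀ (by positivity), mul_comm]
  exact Nat.le_ceil _

theorem tendsto_scaledExponent_ceil [Finite σ] {x : σ → ℝ} (hx : 0 ≤ x) :
    Filter.Tendsto (fun m : ℕ => scaledExponent (Finsupp.equivFunOnFinite.symm
      fun i => ⌈m * x i⌉₊) m) Filter.atTop (nhds x) := by
  refine tendsto_pi_nhds.2 fun i => ?_
  have hupper : Filter.Tendsto (fun m : ℕ => x i + 1 / m) Filter.atTop (nhds (x i)) := by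
    simpa using (tendsto_const_nhds (x := x i)).add (tendsto_one_div_atTop_nhds_zero_nat (𝕜 := ℝ))
  refine tendsto_of_tendsto_of_tendsto_of_le_of_le' tendsto_const_nhds hupper ?_ ?_
  · filter_upwards [Filter.eventually_ne_atTop 0] with m hm using le_scaledExponent_ceil x hm i
  · filter_upwards [Filter.eventually_ne_atTop 0] with m hm
    have hceil := Nat.ceil_lt_add_one (mul_nonneg m.cast_nonneg (hx i))
    rw [scaledExponent, Finsupp.coe_equivFunOnFinite_symm, div_le_iff₀ (by positivity)]
    field_simp
    linarith

end Polyhedra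

namespace WOGraph

variable {s : ℕ} (D : WOGraph s)

theorem fst_ne_snd {e : Fin s × Fin s} (he : e ∈ D.E) : e.1 ≠ e.2 := fun h =>
  D.no_loops e.1 (by rwa [show e = (e.1, e.1) from Prod.ext rfl h.symm] at he)

noncomputable def edgeFinset : Finset (Fin s × Fin s) := D.E.toFinite.toFinset

@[simp]
theorem mem_edgeFinset {e : Fin s × Fin s} : e ∈ D.edgeFinset ↔ e ∈ D.E :=
  Set.Finite.mem_toFinset _

/-- `IP(J(D))`: one inequality `⟪x, α⁻¹⟫ ≥ 1` for each irreducible component `q_α` of `J(D)`. -/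
def irreduciblePolyhedron : Set (Fin s → ℝ) :=
  {x | 0 ≤ x ∧ ∀ e ∈ D.E, 1 ≤ x e.1 + (D.w e.2 : ℝ)⁻¹ * x e.2}

variable {D}

theorem mem_irreduciblePolyhedron_of_le {x y : Fin s → ℝ} (hx : x ∈ D.irreduciblePolyhedron)
    (hxy : x ≤ y) : y ∈ D.irreduciblePolyhedron :=
  ⟨hx.1.trans hxy, fun e he => (hx.2 e he).trans
    (add_le_add (hxy _) (mul_le_mul_of_nonneg_left (hxy _) (by positivity)))⟩

theorem convex_irreduciblePolyhedron : Convex ℝ D.irreduciblePolyhedron := by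
  intro x hx y hy a b ha hb hab
  refine ⟨add_nonneg (smul_nonneg ha hx.1) (smul_nonneg hb hy.1), fun e he => ?_⟩
  calc (1 : ℝ) = a * 1 + b * 1 := by rw [mul_one, mul_one, hab]
    _ ≤ a * (x e.1 + (D.w e.2 : ℝ)⁻¹ * x e.2) + b * (y e.1 + (D.w e.2 : ℝ)⁻¹ * y e.2) := by
        gcongr
        exacts [hx.2 e he, hy.2 e he]
    _ = _ := by simp only [Pi.add_apply, Pi.smul_apply, smul_eq_mul]; ring

variable (K : Type*) [Field K]

theorem alexDual_eq_inf :
    alexDual K D = D.edgeFinset.inf fun e => Ideal.span {X e.1, X e.2 ^ D.w e.2} := by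
  simp [alexDual, Finset.inf_eq_iInf]

theorem alexDual_le_span_X_X {e : Fin s × Fin s} (he : e ∈ D.E) :
    alexDual K D ≤ Ideal.span {X e.1, X e.2} :=
  (iInf₂_le e he).trans (span_X_X_pow_le (D.w_pos e.2))

theorem eq_of_span_le_span {e f : Fin s × Fin s} (he : e ∈ D.E) (hf : f ∈ D.E)
    (h : (Ideal.span {X f.1, X f.2 ^ D.w f.2} : Ideal (MvPolynomial (Fin s) K)) ≤
      Ideal.span {X e.1, X e.2}) : f = e := by
  have h1 := X_mem_span_X_X_iff.1 (h (Ideal.subset_span (Set.mem_insert _ _)))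
  have h2 := X_mem_span_X_X_iff.1 ((isPrime_span_X_X (D.fst_ne_snd he)).mem_of_pow_mem _
    (h (Ideal.subset_span (Set.mem_insert_of_mem _ rfl))))
  have hf' := D.fst_ne_snd hf
  rcases h1 with h1 | h1 <;> rcases h2 with h2 | h2
  · exact absurd (h1.trans h2.symm) hf'
  · exact Prod.ext h1 h2
  · exact absurd (by rwa [show f = (e.2, e.1) from Prod.ext h1 h2] at hf)
      (D.no_two_orientations e.1 e.2 he)
  · exact absurd (h1.trans h2.symm) hf'

theorem exists_span_le_of_alexDual_le {p : Ideal (MvPolynomial (Fin s) K)} (hp : p.IsPrime)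
    (h : alexDual K D ≤ p) : ∃ e ∈ D.E, Ideal.span {X e.1, X e.2} ≤ p := by
  rw [alexDual_eq_inf, hp.inf_le'] at h
  obtain ⟨e, he, hle⟩ := h
  refine ⟨e, (D.mem_edgeFinset).1 he, Ideal.span_le.2 ?_⟩
  rintro _ (rfl | rfl)
  · exact hle (Ideal.subset_span (Set.mem_insert _ _))
  · exact hp.mem_of_pow_mem _ (hle (Ideal.subset_span (Set.mem_insert_of_mem _ rfl)))

theorem minimalPrimes_alexDual :
    (alexDual K D).minimalPrimes = (fun e => Ideal.span {X e.1, X e.2}) '' D.E := by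
  ext p
  constructor
  · rintro ⟨⟨hp, hJp⟩, hmin⟩
    obtain ⟨e, he, hep⟩ := exists_span_le_of_alexDual_le K hp hJp
    exact ⟨e, he, le_antisymm hep
      (hmin ⟨isPrime_span_X_X (D.fst_ne_snd he), alexDual_le_span_X_X K he⟩ hep)⟩
  · rintro ⟨e, he, rfl⟩
    refine ⟨⟨isPrime_span_X_X (D.fst_ne_snd he), alexDual_le_span_X_X K he⟩,
      fun q ⟨hq, hJq⟩ hqe => ?_⟩
    obtain ⟨f, hf, hfq⟩ := exists_span_le_of_alexDual_le K hq hJq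
    obtain rfl := eq_of_span_le_span K he hf
      ((span_X_X_pow_le (D.w_pos f.2)).trans (hfq.trans hqe))
    exact hfq

theorem contractAt_alexDual_pow {e : Fin s × Fin s} (he : e ∈ D.E)
    (hP : (Ideal.span {X e.1, X e.2} : Ideal (MvPolynomial (Fin s) K)).IsPrime) (n : ℕ) :
    contractAt (alexDual K D ^ n) _ hP = Ideal.span {X e.1, X e.2 ^ D.w e.2} ^ n := by
  rw [alexDual_eq_inf, contractAt_finsetInf_pow ((D.mem_edgeFinset).2 he) hP ?_ n]
  · exact contractAt_eq_self hP fun c hc x hcx =>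
      mem_span_X_X_pow_pow_of_mul_mem (D.fst_ne_snd he) hc hcx
  · exact fun f hf hfe hle => hfe (eq_of_span_le_span K he ((D.mem_edgeFinset).1 hf) hle)

theorem symbolicPower_alexDual (n : ℕ) :
    symbolicPower (alexDual K D) n = ⨅ e ∈ D.E, Ideal.span {X e.1, X e.2 ^ D.w e.2} ^ n := by
  refine le_antisymm (le_iInf₂ fun e he => ?_) (le_iInf₂ fun p hp => ?_)
  · have hmem : Ideal.span {X e.1, X e.2} ∈ (alexDual K D).minimalPrimes := by
      rw [minimalPrimes_alexDual]
      exact ⟨e, he, rfl⟩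
    exact (iInf₂_le _ hmem).trans (contractAt_alexDual_pow K he hmem.1.1 n).le
  · have hp' := hp
    rw [minimalPrimes_alexDual] at hp'
    obtain ⟨e, he, rfl⟩ := hp'
    rw [contractAt_alexDual_pow K he]
    exact iInf₂_le e he

theorem mem_symbolicPower_alexDual_iff {n : ℕ} {f : MvPolynomial (Fin s) K} :
    f ∈ symbolicPower (alexDual K D) n ↔
      ∀ e ∈ D.E, ∀ m ∈ f.support, n * D.w e.2 ≤ D.w e.2 * m e.1 + m e.2 := by
  simp only [symbolicPower_alexDual, Ideal.mem_iInf]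
  exact forall₂_congr fun e he => mem_span_X_X_pow_pow_iff (D.fst_ne_snd he)

theorem monomial_mem_symbolicPower_alexDual_of_mem_support {n : ℕ}
    {f : MvPolynomial (Fin s) K} (hf : f ∈ symbolicPower (alexDual K D) n) {m : Fin s →₀ ℕ}
    (hm : m ∈ f.support) : monomial m 1 ∈ symbolicPower (alexDual K D) n := by
  classical
  rw [mem_symbolicPower_alexDual_iff] at hf ⊢
  simpa [support_monomial] using fun e he => hf e he m hm

theorem monomial_mem_symbolicPower_alexDual_iff {n : ℕ} (hn : n ≠ 0) {a : Fin s →₀ ℕ} :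
    monomial a (1 : K) ∈ symbolicPower (alexDual K D) n ↔
      scaledExponent a n ∈ D.irreduciblePolyhedron := by
  classical
  rw [mem_symbolicPower_alexDual_iff, support_monomial, if_neg one_ne_zero]
  simp only [Finset.mem_singleton, forall_eq, irreduciblePolyhedron, Set.mem_ofPred_eq]
  have key (e : Fin s × Fin s) : n * D.w e.2 ≤ D.w e.2 * a e.1 + a e.2 ↔
      1 ≤ scaledExponent a n e.1 + (D.w e.2 : ℝ)⁻¹ * scaledExponent a n e.2 := by
    have hw : (0 : ℝ) < D.w e.2 := by exact_mod_cast D.w_pos e.2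
    have hn' : (0 : ℝ) < n := by positivity
    rw [← Nat.cast_le (α := ℝ), scaledExponent, scaledExponent,
      show (a e.1 : ℝ) / n + (D.w e.2 : ℝ)⁻¹ * (a e.2 / n) =
        (D.w e.2 * a e.1 + a e.2) / (n * D.w e.2) by field_simp,
      le_div_iff₀ (by positivity), one_mul]
    push_cast
    rfl
  exact ⟨fun h => ⟨fun i => div_nonneg (Nat.cast_nonneg _) (Nat.cast_nonneg _),
    fun e he => (key e).1 (h e he)⟩, fun h e he => (key e).2 (h.2 e he)⟩

theorem monIntegralClosure_pow_le_symbolicPower {n : ℕ} (hn : n ≠ 0) :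
    monIntegralClosure K (alexDual K D ^ n) ≤ symbolicPower (alexDual K D) n := by
  refine Ideal.span_le.2 ?_
  rintro _ ⟨a, rfl, p, hp, hap⟩
  have hp0 : p ≠ 0 := Nat.one_le_iff_ne_zero.1 hp
  rw [← pow_mul, monomial_pow, one_pow] at hap
  rw [SetLike.mem_coe, monomial_mem_symbolicPower_alexDual_iff K hn, ← scaledExponent_nsmul a hp0,
    ← monomial_mem_symbolicPower_alexDual_iff K (Nat.mul_ne_zero hn hp0)]
  exact pow_le_symbolicPower _ _ hap

variable {K} {q : ℕ} {v : Fin q → Fin s →₀ ℕ}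

theorem newtonPolyhedron_subset_irreduciblePolyhedron
    (hJ : alexDual K D = Ideal.span (Set.range fun j => monomial (v j) (1 : K))) :
    newtonPolyhedron v ⊆ D.irreduciblePolyhedron := by
  have hv (j : Fin q) : (fun i => (v j i : ℝ)) ∈ D.irreduciblePolyhedron := by
    have hj : monomial (v j) (1 : K) ∈ alexDual K D ^ 1 := by
      rw [pow_one, hJ]
      exact Ideal.subset_span ⟨j, rfl⟩
    simpa using
      (monomial_mem_symbolicPower_alexDual_iff K one_ne_zero).1 (pow_le_symbolicPower _ 1 hj)
  rintro _ ⟨r, hr, y, hy, rfl⟩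
  exact mem_irreduciblePolyhedron_of_le
    (convexHull_min (Set.range_subset_iff.2 hv) convex_irreduciblePolyhedron hy)
    (le_add_of_nonneg_left hr)

theorem irreduciblePolyhedron_subset_newtonPolyhedron
    (hJ : alexDual K D = Ideal.span (Set.range fun j => monomial (v j) (1 : K)))
    (h : ∀ n : ℕ, 1 ≤ n → alexDual K D ^ n = symbolicPower (alexDual K D) n) :
    D.irreduciblePolyhedron ⊆ newtonPolyhedron v := by
  intro x hx
  refine (isClosed_newtonPolyhedron v).mem_of_tendsto (tendsto_scaledExponent_ceil hx.1)
    (Filter.eventually_atTop.2 ⟨1, fun m hm => ?_⟩)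
  have hm0 : m ≠ 0 := Nat.one_le_iff_ne_zero.1 hm
  have hmem := (monomial_mem_symbolicPower_alexDual_iff K hm0).2
    (mem_irreduciblePolyhedron_of_le hx (le_scaledExponent_ceil x hm0))
  rw [← h m hm, hJ, monomial_mem_span_range_monomial_pow_iff] at hmem
  obtain ⟨k, hk, hka⟩ := hmem
  exact scaledExponent_mem_newtonPolyhedron hm0 hk hka

theorem symbolicPower_le_monIntegralClosure_pow
    (hJ : alexDual K D = Ideal.span (Set.range fun j => monomial (v j) (1 : K)))
    (hNP : newtonPolyhedron v = D.irreduciblePolyhedron) {n : ℕ} (hn : n ≠ 0) :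
    symbolicPower (alexDual K D) n ≤ monIntegralClosure K (alexDual K D ^ n) := by
  refine fun f hf => mem_of_forall_monomial_mem fun m hm => ?_
  have hm' := (monomial_mem_symbolicPower_alexDual_iff K hn).1
    (monomial_mem_symbolicPower_alexDual_of_mem_support K hf hm)
  rw [← hNP] at hm'
  obtain ⟨p, hp, k, hk, hka⟩ := exists_sum_nsmul_le_of_mem_newtonPolyhedron hn hm'
  refine monomial_mem_monIntegralClosure hp ?_
  rw [← pow_mul, hJ, monomial_mem_span_range_monomial_pow_iff]
  exact ⟨k, hk, hka⟩

end WOGraph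

theorem alexDual_pow_eq_symbolicPower_iff_general {s q : ℕ} (K : Type*) [Field K]
    (D : WOGraph s)
    (v : Fin q → (Fin s →₀ ℕ))
    (hgen : alexDual K D = Ideal.span { f | ∃ j : Fin q, f = monomial (v j) (1 : K) }) :
    (∀ n : ℕ, 1 ≤ n → alexDual K D ^ n = symbolicPower (alexDual K D) n) ↔
      ((∀ n : ℕ, 1 ≤ n → alexDual K D ^ n = monIntegralClosure K (alexDual K D ^ n)) ∧
        {x : Fin s → ℝ | 0 ≤ x} +
            convexHull ℝ (Set.range fun j : Fin q => fun i : Fin s => (v j i : ℝ)) =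
          {x : Fin s → ℝ | 0 ≤ x ∧
            ∀ e ∈ D.E, 1 ≤ x e.1 + (D.w e.2 : ℝ)⁻¹ * x e.2}) := by
  have hJ : alexDual K D = Ideal.span (Set.range fun j => monomial (v j) (1 : K)) := by
    rw [hgen]
    simp only [Set.range, eq_comm]
  change _ ↔ _ ∧ newtonPolyhedron v = D.irreduciblePolyhedron
  constructor
  · intro h
    refine ⟨fun n hn => le_antisymm ?_ ((D.monIntegralClosure_pow_le_symbolicPower K
      (by omega)).trans (h n hn).ge), (D.newtonPolyhedron_subset_irreduciblePolyhedron hJ).antisymm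
        (D.irreduciblePolyhedron_subset_newtonPolyhedron hJ h)⟩
    rw [hJ, span_range_monomial_pow]
    exact span_monomial_image_le_monIntegralClosure K _
  · rintro ⟨hnormal, hNP⟩ n hn
    exact le_antisymm (pow_le_symbolicPower _ n)
      ((D.symbolicPower_le_monIntegralClosure_pow hJ hNP (by omega)).trans (hnormal n hn).ge)

/-- **Corollary (normally torsion-free Alexander duals).** Let `D` be a weighted
oriented graph with at least one edge and `J(D)` the Alexander dual of `I(D)`, with
minimal monomial generating set `{t^{v_1}, …, t^{v_q}}`. Then `J(D)ⁿ = J(D)^{(n)}` for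
all `n ≥ 1` if and only if `J(D)` is a normal ideal and `NP(J(D)) = IP(J(D))`, where
`NP(J(D)) = ℝ₊^s + conv(v_1, …, v_q)` and
`IP(J(D)) = {x : x ≥ 0, x_i + w_j⁻¹ x_j ≥ 1 for every (t_i, t_j) ∈ E(D)}`. -/
theorem alexDual_pow_eq_symbolicPower_iff {s q : ℕ} (K : Type*) [Field K]
    (D : WOGraph s) (hE : D.E.Nonempty)
    (v : Fin q → (Fin s →₀ ℕ))
    (hgen : alexDual K D = Ideal.span { f | ∃ j : Fin q, f = monomial (v j) (1 : K) })
    (hmingen : ∀ j : Fin q, monomial (v j) (1 : K) ∉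
      Ideal.span { f | ∃ k : Fin q, k ≠ j ∧ f = monomial (v k) (1 : K) }) :
    (∀ n : ℕ, 1 ≤ n → alexDual K D ^ n = symbolicPower (alexDual K D) n) ↔
      ((∀ n : ℕ, 1 ≤ n → alexDual K D ^ n = monIntegralClosure K (alexDual K D ^ n)) ∧
        {x : Fin s → ℝ | 0 ≤ x} +
            convexHull ℝ (Set.range fun j : Fin q => fun i : Fin s => (v j i : ℝ)) =
          {x : Fin s → ℝ | 0 ≤ x ∧
            ∀ e ∈ D.E, 1 ≤ x e.1 + (D.w e.2 : ℝ)⁻¹ * x e.2}) :=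
  alexDual_pow_eq_symbolicPower_iff_general K D v hgen
end

section
/- Let I ⊆ S = K[t_1,…,t_s] be a monomial ideal with minimal monomial generating set G(I) = {t^{v_1}, …, t^{v_q}}, where v_i = (v_{i,1}, …, v_{i,s}), and let I = I_1 ∩ ⋯ ∩ I_m be its irreducible decomposition. Then the set of pure powers {t_j^{v_{i,j}} : 1 ≤ i ≤ q, 1 ≤ j ≤ s, v_{i,j} ≥ 1} equals the union G(I_1) ∪ ⋯ ∪ G(I_m) of the minimal monomial generating sets of the irreducible components. -/
open MvPolynomial Pointwise

/-!
Everything reduces to exponent vectors: `t^a ∈ I` iff `a` dominates some `v_k`, and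
`t^a ∈ q_b` iff `1 ≤ b_j ≤ a_j` for some `j`.

If `v_{i,j} ≥ 1`, minimality of `G(I)` puts `t^{v_i} / t_j` outside `I`, hence outside some
component `q_{α_l}`, which still contains `t^{v_i}`; the only coordinate that can witness this is
`j`, and then `α_{l,j} = v_{i,j}`.

Conversely, if `α_{l,j} ≥ 1`, irredundancy gives a monomial `t^a` lying in every component except
`q_{α_l}`. Setting its `j`-th exponent to `α_{l,j}` puts it in `I`, setting it to `α_{l,j} - 1`
does not, so a generator dividing the first but not the second has `j`-th exponent `α_{l,j}`.
-/

namespace MvPolynomial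

variable {σ R : Type*} [CommSemiring R]

theorem monomial_mem_span_monomial_image_iff [Nontrivial R] (D : Set (σ →₀ ℕ))
    (a : σ →₀ ℕ) :
    monomial a (1 : R) ∈ Ideal.span ((fun d => monomial d (1 : R)) '' D) ↔ ∃ d ∈ D, d ≤ a := by
  classical
  rw [mem_ideal_span_monomial_image, support_monomial, if_neg one_ne_zero]
  simp only [Finset.mem_singleton, forall_eq]

theorem mem_span_range_monomial_iff {ι : Type*} (v : ι → σ →₀ ℕ)
    (f : MvPolynomial σ R) :
    f ∈ Ideal.span { g | ∃ k, g = monomial (v k) (1 : R) } ↔ ∀ a ∈ f.support, ∃ k, v k ≤ a := by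
  have hset : { g | ∃ k, g = monomial (v k) (1 : R) } = (fun d => monomial d 1) '' Set.range v := by
    ext; simp [eq_comm]
  simp [hset, mem_ideal_span_monomial_image]

theorem monomial_mem_span_range_monomial_iff [Nontrivial R] {ι : Type*}
    (v : ι → σ →₀ ℕ) (a : σ →₀ ℕ) :
    monomial a (1 : R) ∈ Ideal.span { g | ∃ k, g = monomial (v k) (1 : R) } ↔ ∃ k, v k ≤ a := by
  classical
  rw [mem_span_range_monomial_iff, support_monomial, if_neg one_ne_zero]
  simp only [Finset.mem_singleton, forall_eq]

theorem monomial_mem_span_monomial_ne_iff [Nontrivial R] {ι : Type*}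
    (v : ι → σ →₀ ℕ) (i : ι) (a : σ →₀ ℕ) :
    monomial a (1 : R) ∈ Ideal.span { g | ∃ k, k ≠ i ∧ g = monomial (v k) (1 : R) } ↔
      ∃ k, k ≠ i ∧ v k ≤ a := by
  have hset : { g | ∃ k, k ≠ i ∧ g = monomial (v k) (1 : R) } =
      (fun d => monomial d 1) '' (v '' {i}ᶜ) := by
    ext; simp [eq_comm]
  simp [hset, monomial_mem_span_monomial_image_iff]

end MvPolynomial

section IrreducibleIdeal

variable {K : Type*} [Field K] {s : ℕ}

theorem mem_irredIdeal_iff (b : Fin s → ℕ) (f : MvPolynomial (Fin s) K) :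
    f ∈ irredIdeal K b ↔ ∀ a ∈ f.support, ∃ j, 1 ≤ b j ∧ b j ≤ a j := by
  have hset : { f : MvPolynomial (Fin s) K | ∃ i, 1 ≤ b i ∧ f = X i ^ b i } =
      (fun d => monomial d 1) '' { d | ∃ i, 1 ≤ b i ∧ d = Finsupp.single i (b i) } := by
    ext; simp [X_pow_eq_monomial, eq_comm]
  simp [irredIdeal, hset, mem_ideal_span_monomial_image, Finsupp.single_le_iff]

theorem monomial_mem_irredIdeal_iff (b : Fin s → ℕ) (a : Fin s →₀ ℕ) :
    monomial a (1 : K) ∈ irredIdeal K b ↔ ∃ j, 1 ≤ b j ∧ b j ≤ a j := by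
  classical
  rw [mem_irredIdeal_iff, support_monomial, if_neg one_ne_zero]
  simp only [Finset.mem_singleton, forall_eq]

theorem exists_exponent_of_span_lt_iInf_ne {ι κ : Type*} (v : ι → Fin s →₀ ℕ)
    (α : κ → Fin s → ℕ) (l : κ)
    (hlt : Ideal.span { g | ∃ k, g = monomial (v k) (1 : K) } <
      ⨅ i ∈ ({l}ᶜ : Set κ), irredIdeal K (α i)) :
    ∃ a : Fin s →₀ ℕ, (∀ i ≠ l, ∃ j, 1 ≤ α i j ∧ α i j ≤ a j) ∧ ¬∃ k, v k ≤ a := by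
  obtain ⟨f, hfJ, hfI⟩ := SetLike.exists_of_lt hlt
  classical
  rw [mem_span_range_monomial_iff] at hfI
  push Not at hfI
  obtain ⟨a, ha, hav⟩ := hfI
  refine ⟨a, fun i hi => ?_, by simpa using hav⟩
  have hfi : f ∈ irredIdeal K (α i) := Ideal.mem_iInf.mp (Ideal.mem_iInf.mp hfJ i) hi
  exact (mem_irredIdeal_iff (α i) f).mp hfi a ha

end IrreducibleIdeal

section Staircase

variable {ι κ σ : Type*} [DecidableEq σ] {v : ι → σ →₀ ℕ} {α : κ → σ → ℕ}

theorem exists_component_eq_of_minimal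
    (hdec : ∀ a, (∃ k, v k ≤ a) ↔ ∀ l, ∃ j, 1 ≤ α l j ∧ α l j ≤ a j)
    (hmin : ∀ i k, v k ≤ v i → k = i) {i : ι} {j : σ} (hij : 1 ≤ v i j) :
    ∃ l, α l j = v i j := by
  set a := (v i).update j (v i j - 1) with ha
  have ha_notMem : ¬∃ k, v k ≤ a := by
    rintro ⟨k, hk⟩
    have hki : v k ≤ v i := hk.trans fun j' => by
      rcases eq_or_ne j' j with rfl | hj' <;> simp [*]
    have := hk j
    rw [hmin i k hki] at this
    simp only [ha, Finsupp.coe_update, Function.update_self] at this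
    omega
  obtain ⟨l, hl⟩ : ∃ l, ∀ j', 1 ≤ α l j' → a j' < α l j' := by
    simpa [hdec] using ha_notMem
  obtain ⟨j', hj'_pos, hj'_le⟩ := (hdec (v i)).1 ⟨i, le_rfl⟩ l
  have hj'_lt := hl j' hj'_pos
  rcases eq_or_ne j' j with rfl | hj'
  · simp only [ha, Finsupp.coe_update, Function.update_self] at hj'_lt
    exact ⟨l, by omega⟩
  · simp only [ha, Finsupp.coe_update, Function.update_of_ne hj'] at hj'_lt
    omega

theorem exists_generator_eq_of_irredundant
    (hdec : ∀ a, (∃ k, v k ≤ a) ↔ ∀ l, ∃ j, 1 ≤ α l j ∧ α l j ≤ a j) {l : κ}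
    (hirr : ∃ a, (∀ i ≠ l, ∃ j, 1 ≤ α i j ∧ α i j ≤ a j) ∧ ¬∃ k, v k ≤ a)
    {j : σ} (hlj : 1 ≤ α l j) : ∃ i, v i j = α l j := by
  obtain ⟨a, ha_other, ha_notMem⟩ := hirr
  have ha_l : ∀ j', 1 ≤ α l j' → a j' < α l j' := by
    by_contra! h
    exact ha_notMem ((hdec a).2 fun i => (eq_or_ne i l).elim (· ▸ h) (ha_other i))
  have ha_le : a ≤ a.update j (α l j) := fun j' => by
    rcases eq_or_ne j' j with rfl | hj'
    · simpa using (ha_l j' hlj).le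
    · simp [hj']
  obtain ⟨k, hk⟩ : ∃ k, v k ≤ a.update j (α l j) := (hdec _).2 fun i => by
    by_cases hi : i = l
    · subst hi
      exact ⟨j, hlj, by simp⟩
    · obtain ⟨j', h_pos, h_le⟩ := ha_other i hi
      exact ⟨j', h_pos, h_le.trans (ha_le j')⟩
  have hk_not_le : ¬v k ≤ a.update j (α l j - 1) := fun h => by
    obtain ⟨j', h_pos, h_le⟩ := (hdec _).1 ⟨k, h⟩ l
    have := ha_l j' h_pos
    rcases eq_or_ne j' j with rfl | hj'
    · simp only [Finsupp.coe_update, Function.update_self] at h_le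
      omega
    · simp only [Finsupp.coe_update, Function.update_of_ne hj'] at h_le
      omega
  obtain ⟨j', hj'⟩ : ∃ j', a.update j (α l j - 1) j' < v k j' := by
    simpa [Finsupp.le_def] using hk_not_le
  have hkj' := hk j'
  rcases eq_or_ne j' j with rfl | hne
  · simp only [Finsupp.coe_update, Function.update_self] at hkj' hj'
    exact ⟨k, by omega⟩
  · simp only [Finsupp.coe_update, Function.update_of_ne hne] at hkj' hj'
    omega

end Staircase

theorem pure_powers_eq_union_gens_of_components_general {s q m : ℕ} (K : Type*) [Field K]
    (I : Ideal (MvPolynomial (Fin s) K))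
    (v : Fin q → (Fin s →₀ ℕ))
    (hgen : I = Ideal.span { f | ∃ j : Fin q, f = monomial (v j) (1 : K) })
    (hmingen : ∀ j : Fin q, monomial (v j) (1 : K) ∉
      Ideal.span { f | ∃ k : Fin q, k ≠ j ∧ f = monomial (v k) (1 : K) })
    (α : Fin m → (Fin s → ℕ))
    (hdec : I = ⨅ i, irredIdeal K (α i))
    (hirr : ∀ j : Fin m, I ≠ ⨅ i ∈ ({j}ᶜ : Set (Fin m)), irredIdeal K (α i)) :
    { g : MvPolynomial (Fin s) K | ∃ i : Fin q, ∃ j : Fin s, 1 ≤ v i j ∧ g = X j ^ v i j } =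
      ⋃ i : Fin m, { g | ∃ j : Fin s, 1 ≤ α i j ∧ g = X j ^ α i j } := by
  have hstaircase : ∀ a, (∃ k, v k ≤ a) ↔ ∀ l, ∃ j, 1 ≤ α l j ∧ α l j ≤ a j := fun a => by
    simp only [← monomial_mem_span_range_monomial_iff (R := K), ← hgen, hdec, Ideal.mem_iInf,
      monomial_mem_irredIdeal_iff]
  have hmin : ∀ i k, v k ≤ v i → k = i := fun i k hki =>
    by_contra fun hne => hmingen i ((monomial_mem_span_monomial_ne_iff v i _).2 ⟨k, hne, hki⟩)
  have hirr' : ∀ l, ∃ a, (∀ i ≠ l, ∃ j, 1 ≤ α i j ∧ α i j ≤ a j) ∧ ¬∃ k, v k ≤ a := fun l => by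
    have hle : I ≤ ⨅ i ∈ ({l}ᶜ : Set (Fin m)), irredIdeal K (α i) :=
      hdec ▸ le_iInf₂ fun i _ => iInf_le _ i
    exact exists_exponent_of_span_lt_iInf_ne v α l (hgen ▸ hle.lt_of_ne (hirr l))
  ext g
  simp only [Set.mem_iUnion]
  constructor
  · rintro ⟨i, j, hij, rfl⟩
    obtain ⟨l, hl⟩ := exists_component_eq_of_minimal hstaircase hmin hij
    exact ⟨l, j, hl ▸ hij, hl ▸ rfl⟩
  · rintro ⟨l, j, hlj, rfl⟩
    obtain ⟨i, hi⟩ := exists_generator_eq_of_irredundant hstaircase (hirr' l) hlj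
    exact ⟨i, j, hi ▸ hlj, hi ▸ rfl⟩

/-- **Lemma (duality of exponents).** Let `I ⊆ S = K[t_1,…,t_s]` be a monomial ideal with
minimal monomial generating set `G(I) = {t^{v_1}, …, t^{v_q}}` and (irredundant)
irreducible decomposition `I = q_{α_1} ∩ ⋯ ∩ q_{α_m}`. Then
`{t_j^{v_{i,j}} : v_{i,j} ≥ 1} = G(q_{α_1}) ∪ ⋯ ∪ G(q_{α_m})`, where
`G(q_b) = {t_j^{b_j} : b_j ≥ 1}`. -/
theorem pure_powers_eq_union_gens_of_components {s q m : ℕ} (K : Type*) [Field K]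
    (I : Ideal (MvPolynomial (Fin s) K))
    (v : Fin q → (Fin s →₀ ℕ))
    (hgen : I = Ideal.span { f | ∃ j : Fin q, f = monomial (v j) (1 : K) })
    (hmingen : ∀ j : Fin q, monomial (v j) (1 : K) ∉
      Ideal.span { f | ∃ k : Fin q, k ≠ j ∧ f = monomial (v k) (1 : K) })
    (α : Fin m → (Fin s → ℕ)) (hα : ∀ i, α i ≠ 0)
    (hdec : I = ⨅ i, irredIdeal K (α i))
    (hirr : ∀ j : Fin m, I ≠ ⨅ i ∈ ({j}ᶜ : Set (Fin m)), irredIdeal K (α i)) :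
    { g : MvPolynomial (Fin s) K | ∃ i : Fin q, ∃ j : Fin s, 1 ≤ v i j ∧ g = X j ^ v i j } =
      ⋃ i : Fin m, { g | ∃ j : Fin s, 1 ≤ α i j ∧ g = X j ^ α i j } :=
  pure_powers_eq_union_gens_of_components_general K I v hgen hmingen α hdec hirr
end
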